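/- For n = 2k, the polytope Δ ∩ ∇ (for a circuit u_1,...,u_n in ℝ^{n-1}, Δ = conv{u_i}, ∇ = −Δ) is affinely isomorphic to the hypersimplex Δ_{2k,k}, defined as the intersection of the cube [0,1]^{2k} with the hyperplane x_1 + ... + x_{2k} = k. -/

import Mathlib

open Finset Submodule

/-!
The coefficient map `φ : ℝⁿ → V`, `c ↦ ∑ cᵢ uᵢ`, of a circuit is onto with kernel `ℝ • 1`, so it
restricts to an affine isomorphism from the hyperplane `∑ cᵢ = 1` onto `V`; call its inverse `g`.
Then `Δ` is cut out by `0 ≤ gᵢ`, and since `g (-x) = (2 / n) • 1 - g x`, `-Δ` is cut out by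
`gᵢ ≤ 2 / n`. So `g` maps `Δ ∩ -Δ` onto `{c ∈ [0, 2 / n]ⁿ | ∑ cᵢ = 1}`, which is `Δ_{2k,k}` scaled
by `1 / k` when `n = 2k`.
-/

section Circuit

variable {ι V : Type*} [Fintype ι] [AddCommGroup V] [Module ℝ V]

theorem convexHull_range_eq_image_stdSimplex (u : ι → V) :
    convexHull ℝ (Set.range u) = Fintype.linearCombination ℝ u '' stdSimplex ℝ ι := by
  classical
  rw [← convexHull_rangle_single_eq_stdSimplex, LinearMap.image_convexHull, ← Set.range_comp]
  congr 1
  ext i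
  simp [Fintype.linearCombination_apply_single]

theorem ker_linearCombination_eq_span_one [FiniteDimensional ℝ V] {u : ι → V}
    (hspan : span ℝ (Set.range u) = ⊤) (hsum : ∑ i, u i = 0)
    (hcard : Fintype.card ι = Module.finrank ℝ V + 1) :
    LinearMap.ker (Fintype.linearCombination ℝ u) = ℝ ∙ (1 : ι → ℝ) := by
  have : Nonempty ι := Fintype.card_pos_iff.mp (by omega)
  refine (eq_of_le_of_finrank_eq ?_ ?_).symm
  · rw [span_singleton_le_iff_mem, LinearMap.mem_ker]
    simpa [Fintype.linearCombination_apply] using hsum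
  · have := LinearMap.finrank_range_add_finrank_ker (Fintype.linearCombination ℝ u)
    rw [Fintype.range_linearCombination, hspan, finrank_top,
      Module.finrank_fintype_fun_eq_card] at this
    rw [finrank_span_singleton one_ne_zero]
    omega

theorem eq_of_linearCombination_eq_of_sum_eq {u : ι → V}
    (hker : LinearMap.ker (Fintype.linearCombination ℝ u) = ℝ ∙ (1 : ι → ℝ)) {c c' : ι → ℝ}
    (h : Fintype.linearCombination ℝ u c = Fintype.linearCombination ℝ u c')
    (hs : ∑ i, c i = ∑ i, c' i) : c = c' := by
  obtain ⟨t, ht⟩ := mem_span_singleton.mp (hker ▸ LinearMap.sub_mem_ker_iff.mpr h)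
  have htsum : (Fintype.card ι : ℝ) * t = 0 := by
    simpa [sum_sub_distrib, hs, mul_comm] using congrArg (fun c => ∑ i, c i) ht
  rcases mul_eq_zero.mp htsum with hι | rfl
  · have : IsEmpty ι := Fintype.card_eq_zero_iff.mp (by exact_mod_cast hι)
    exact Subsingleton.elim _ _
  · exact sub_eq_zero.mp (by simpa using ht.symm)

theorem exists_affineMap_linearCombination_apply_and_sum_eq_one [Nonempty ι] {u : ι → V}
    (hspan : span ℝ (Set.range u) = ⊤) (hsum : ∑ i, u i = 0) :
    ∃ g : V →ᵃ[ℝ] (ι → ℝ), ∀ x, Fintype.linearCombination ℝ u (g x) = x ∧ ∑ i, g x i = 1 := by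
  obtain ⟨s, hs⟩ := (Fintype.linearCombination ℝ u).exists_rightInverse_of_surjective
    (by rw [Fintype.range_linearCombination, hspan])
  have hs_apply (x : V) : Fintype.linearCombination ℝ u (s x) = x := LinearMap.congr_fun hs x
  set n : ℝ := (Fintype.card ι : ℝ)
  have hn : n ≠ 0 := Nat.cast_ne_zero.mpr Fintype.card_ne_zero
  have h1 : Fintype.linearCombination ℝ u 1 = 0 := by
    simpa [Fintype.linearCombination_apply] using hsum
  let σ : (ι → ℝ) →ₗ[ℝ] ℝ := ∑ i, LinearMap.proj i
  -- `s x` moved along the kernel direction `1` onto the hyperplane `∑ i, c i = 1`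
  let g : V →ᵃ[ℝ] (ι → ℝ) :=
    (s - (n⁻¹ • σ.comp s).smulRight 1).toAffineMap + AffineMap.const ℝ V (n⁻¹ • 1)
  have hg_apply (x : V) : g x = s x - (n⁻¹ * σ (s x)) • 1 + n⁻¹ • 1 := rfl
  have hσ (c : ι → ℝ) : σ c = ∑ i, c i := by simp [σ]
  refine ⟨g, fun x => ⟨?_, ?_⟩⟩
  · simp only [hg_apply, map_add, map_sub, map_smul, h1, smul_zero, sub_zero, add_zero, hs_apply]
  · simp only [hg_apply, hσ, Pi.add_apply, Pi.sub_apply, Pi.smul_apply, Pi.one_apply, smul_eq_mul,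
      mul_one, sum_add_distrib, sum_sub_distrib, sum_const, card_univ, nsmul_eq_mul]
    field_simp
    ring

theorem apply_linearCombination_of_sum_eq_one {u : ι → V} {g : V → ι → ℝ}
    (hker : LinearMap.ker (Fintype.linearCombination ℝ u) = ℝ ∙ (1 : ι → ℝ))
    (hg : ∀ x, Fintype.linearCombination ℝ u (g x) = x ∧ ∑ i, g x i = 1)
    {c : ι → ℝ} (hc : ∑ i, c i = 1) : g (Fintype.linearCombination ℝ u c) = c :=
  eq_of_linearCombination_eq_of_sum_eq hker (hg _).1 (by rw [(hg _).2, hc])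

theorem mem_convexHull_range_iff_forall_nonneg {u : ι → V} {g : V → ι → ℝ}
    (hker : LinearMap.ker (Fintype.linearCombination ℝ u) = ℝ ∙ (1 : ι → ℝ))
    (hg : ∀ x, Fintype.linearCombination ℝ u (g x) = x ∧ ∑ i, g x i = 1) {x : V} :
    x ∈ convexHull ℝ (Set.range u) ↔ ∀ i, 0 ≤ g x i := by
  rw [convexHull_range_eq_image_stdSimplex]
  constructor
  · rintro ⟨c, ⟨hc0, hc1⟩, rfl⟩
    rwa [apply_linearCombination_of_sum_eq_one hker hg hc1]
  · exact fun h => ⟨g x, ⟨h, (hg x).2⟩, (hg x).1⟩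

theorem mem_neg_convexHull_range_iff_forall_le [Nonempty ι] {u : ι → V} {g : V → ι → ℝ}
    (hker : LinearMap.ker (Fintype.linearCombination ℝ u) = ℝ ∙ (1 : ι → ℝ))
    (hg : ∀ x, Fintype.linearCombination ℝ u (g x) = x ∧ ∑ i, g x i = 1) {x : V} :
    x ∈ -convexHull ℝ (Set.range u) ↔ ∀ i, g x i ≤ 2 / Fintype.card ι := by
  have hn : (Fintype.card ι : ℝ) ≠ 0 := Nat.cast_ne_zero.mpr Fintype.card_ne_zero
  have h1 : Fintype.linearCombination ℝ u 1 = 0 :=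
    LinearMap.mem_ker.mp (hker ▸ mem_span_singleton_self _)
  have hneg : g (-x) = (2 / Fintype.card ι : ℝ) • 1 - g x := by
    rw [← apply_linearCombination_of_sum_eq_one hker hg (c := (2 / Fintype.card ι : ℝ) • 1 - g x)]
    · simp [h1, (hg x).1]
    · simp only [Pi.sub_apply, Pi.smul_apply, Pi.one_apply, smul_eq_mul, mul_one,
        sum_sub_distrib, sum_const, card_univ, nsmul_eq_mul, (hg x).2]
      field_simp
      norm_num
  rw [Set.mem_neg, mem_convexHull_range_iff_forall_nonneg hker hg, hneg]
  simp [sub_nonneg]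

theorem image_convexHull_inter_neg_convexHull [Nonempty ι] {u : ι → V} {g : V → ι → ℝ}
    (hker : LinearMap.ker (Fintype.linearCombination ℝ u) = ℝ ∙ (1 : ι → ℝ))
    (hg : ∀ x, Fintype.linearCombination ℝ u (g x) = x ∧ ∑ i, g x i = 1) :
    g '' (convexHull ℝ (Set.range u) ∩ -convexHull ℝ (Set.range u)) =
      {c | (∀ i, c i ∈ Set.Icc 0 (2 / Fintype.card ι : ℝ)) ∧ ∑ i, c i = 1} := by
  ext c
  constructor
  · rintro ⟨x, ⟨hx, hx'⟩, rfl⟩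
    rw [mem_convexHull_range_iff_forall_nonneg hker hg] at hx
    rw [mem_neg_convexHull_range_iff_forall_le hker hg] at hx'
    exact ⟨fun i => ⟨hx i, hx' i⟩, (hg x).2⟩
  · rintro ⟨hc, hc1⟩
    have hgc := apply_linearCombination_of_sum_eq_one hker hg hc1
    refine ⟨Fintype.linearCombination ℝ u c, ⟨?_, ?_⟩, hgc⟩
    · rw [mem_convexHull_range_iff_forall_nonneg hker hg, hgc]
      exact fun i => (hc i).1
    · rw [mem_neg_convexHull_range_iff_forall_le hker hg, hgc]
      exact fun i => (hc i).2

end Circuit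

def hypersimplex (ι : Type*) [Fintype ι] (r : ℝ) : Set (ι → ℝ) :=
  {x | (∀ i, x i ∈ Set.Icc 0 1) ∧ ∑ i, x i = r}

open scoped Pointwise in
theorem hypersimplex_eq_image_smul {ι : Type*} [Fintype ι] {a : ℝ} (ha : 0 < a) :
    hypersimplex ι a = (a • ·) '' {c : ι → ℝ | (∀ i, c i ∈ Set.Icc 0 a⁻¹) ∧ ∑ i, c i = 1} := by
  ext x
  rw [Set.image_smul, Set.mem_smul_set_iff_inv_smul_mem₀ ha.ne']
  have ha' : 0 < a⁻¹ := inv_pos.mpr ha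
  simp only [hypersimplex, Set.mem_ofPred_eq, Set.mem_Icc, Pi.smul_apply, smul_eq_mul, ← mul_sum,
    mul_nonneg_iff_of_pos_left ha', mul_le_iff_le_one_right ha', inv_mul_eq_one₀ ha.ne', eq_comm]

theorem simplex_inter_neg_affine_iso_hypersimplex (k : ℕ) (hk : 1 ≤ k)
    (u : Fin (2*k) → (Fin (2*k-1) → ℝ))
    (hspan : Submodule.span ℝ (Set.range u) = ⊤)
    (hsum : ∑ i, u i = 0) :
    ∃ f : (Fin (2*k-1) → ℝ) →ᵃ[ℝ] (Fin (2*k) → ℝ),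
      Function.Injective f ∧
      f '' (convexHull ℝ (Set.range u) ∩ -convexHull ℝ (Set.range u))
        = {x : Fin (2*k) → ℝ | (∀ i, x i ∈ Set.Icc (0:ℝ) 1) ∧ ∑ i, x i = (k : ℝ)} := by
  have : Nonempty (Fin (2*k)) := ⟨⟨0, by omega⟩⟩
  have hker := ker_linearCombination_eq_span_one hspan hsum
    (by rw [Fintype.card_fin, Module.finrank_fin_fun]; omega)
  obtain ⟨g, hg⟩ := exists_affineMap_linearCombination_apply_and_sum_eq_one hspan hsum
  have hk : (0 : ℝ) < k := Nat.cast_pos.mpr hk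
  refine ⟨(k : ℝ) • g,
    (smul_right_injective _ hk.ne').comp fun x y h => by rw [← (hg x).1, h, (hg y).1], ?_⟩
  have hcoe : ⇑((k : ℝ) • g) = (fun c => (k : ℝ) • c) ∘ g := rfl
  have hbound : 2 / (Fintype.card (Fin (2*k)) : ℝ) = (k : ℝ)⁻¹ := by
    rw [Fintype.card_fin, Nat.cast_mul, Nat.cast_two]
    field_simp
  rw [hcoe, Set.image_comp, image_convexHull_inter_neg_convexHull hker hg, hbound]
  exact (hypersimplex_eq_image_smul hk).symm
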